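/- arXiv:1911.03259 — 4 statements merged into one kernel-verified Lean document; each statement's English description precedes it below -/
import Mathlib

section
/- Let w ∈ [m]^n be a word, D(w) the m×n 0-1 matrix with d_{w_i,i}=1, and π = Φ^{−1}(D(w)) the corresponding strict tableau. Then the shape of π is (L_m(w), L_{m−1}(w), …, L_1(w)), where L_i(w) is the length of the longest weakly increasing subsequence of w using only letters from {m−i+1,…,m}. -/
open scoped BigOperators

/-- A plane partition: a finitely supported `ℕ`-array (0-indexed) weakly
decreasing along rows and columns. -/
structure PlanePartition where
  entry : ℕ → ℕ → ℕ
  row_decr : ∀ i j, entry i (j + 1) ≤ entry i j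
  col_decr : ∀ i j, entry (i + 1) j ≤ entry i j
  finite_support : {p : ℕ × ℕ | entry p.1 p.2 ≠ 0}.Finite

namespace PlanePartition

/-- `π` has at most `n` (nonzero) rows. -/
def RowsLE (π : PlanePartition) (n : ℕ) : Prop := ∀ i j, n ≤ i → π.entry i j = 0

/-- `π` has at most `k` (nonzero) columns. -/
def ColsLE (π : PlanePartition) (k : ℕ) : Prop := ∀ i j, k ≤ j → π.entry i j = 0

/-- all entries of `π` are at most `m`. -/
def EntriesLE (π : PlanePartition) (m : ℕ) : Prop := ∀ i j, π.entry i j ≤ m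

/-- The descent set of `π` (0-indexed cells). -/
def Des (π : PlanePartition) : Set (ℕ × ℕ) :=
  {p | π.entry (p.1 + 1) p.2 < π.entry p.1 p.2}

/-- number of descents of `π`. -/
noncomputable def des (π : PlanePartition) : ℕ := π.Des.ncard

/-- `dmat π i ℓ` is the matrix entry `d_{i+1, ℓ+1}` of `Φ(π)`: the number of columns `j`
with `π_{ij} = ℓ+1 > π_{i+1,j}` (here `i`, `ℓ` are 0-indexed). -/
noncomputable def dmat (π : PlanePartition) (i ℓ : ℕ) : ℕ :=
  {j : ℕ | π.entry i j = ℓ + 1 ∧ π.entry (i + 1) j ≤ ℓ}.ncard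

/-- the volume `|π|`. -/
noncomputable def vol (π : PlanePartition) : ℕ := ∑ᶠ p : ℕ × ℕ, π.entry p.1 p.2

/-- the up-hook volume `|π|_{uh} = Σ_{(i,j) ∈ Des(π)} (π_{ij} + i - 1)` (1-indexed `i`;
in our 0-indexed convention the summand is `π.entry p.1 p.2 + p.1`). -/
noncomputable def uhvol (π : PlanePartition) : ℕ :=
  ∑ᶠ p ∈ π.Des, (π.entry p.1 p.2 + p.1)

/-- the corner volume `|π|_c = Σ_{(i,j) ∈ Des(π)} π_{ij}`. -/
noncomputable def cvol (π : PlanePartition) : ℕ :=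
  ∑ᶠ p ∈ π.Des, π.entry p.1 p.2

/-- the trace `tr(π) = Σ_i π_{ii}`. -/
noncomputable def trace (π : PlanePartition) : ℕ := ∑ᶠ i : ℕ, π.entry i i

/-- `colCount π v` is the number of columns of `π` containing the entry `v`. -/
noncomputable def colCount (π : PlanePartition) (v : ℕ) : ℕ :=
  {j : ℕ | ∃ i, π.entry i j = v}.ncard

/-- the length of row `i` (0-indexed) of `π`. -/
noncomputable def rowLen (π : PlanePartition) (i : ℕ) : ℕ :=
  {j : ℕ | π.entry i j ≠ 0}.ncard

/-- `π` is column-strict: entries strictly decrease down the columns (within the shape). -/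
def ColStrict (π : PlanePartition) : Prop :=
  ∀ i j, π.entry i j ≠ 0 → π.entry (i + 1) j < π.entry i j

/-- the shape of `π` is exactly the rectangle with `n` rows and `k` columns. -/
def ShapeRect (π : PlanePartition) (k n : ℕ) : Prop :=
  ∀ i j, π.entry i j ≠ 0 ↔ i < n ∧ j < k

end PlanePartition

/-- The Schur polynomial `s_{(k^n)}` of rectangular shape `(k^n)` in `N` variables
`x 0, …, x (N-1)`, defined via column-strict plane partitions of shape `(k^n)` with
entries at most `N`; the variable `x i` records entries equal to `i + 1`. -/
noncomputable def schurRect {R : Type*} [CommSemiring R] (k n N : ℕ) (x : ℕ → R) : R :=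
  ∑ᶠ π ∈ {π : PlanePartition | π.ColStrict ∧ π.ShapeRect k n ∧ π.EntriesLE N},
    ∏ i ∈ Finset.range N, x i ^ ({p : ℕ × ℕ | π.entry p.1 p.2 = i + 1}.ncard)

/-- `Lge w k` is the length of the longest weakly increasing subsequence of the word
`w` all of whose letters are `≥ k` (0-indexed letters; in the paper's 1-indexed
notation this is `L_{m-k}(w)`). -/
noncomputable def Lge {n m : ℕ} (w : Fin n → Fin m) (k : ℕ) : ℕ :=
  sSup {N : ℕ | ∃ t : Finset (Fin n), t.card = N ∧ (∀ a ∈ t, k ≤ (w a : ℕ)) ∧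
    ∀ a ∈ t, ∀ b ∈ t, a ≤ b → w a ≤ w b}

namespace Statement13Aux

lemma col_antitone (π : PlanePartition) (j : ℕ) : Antitone (fun i => π.entry i j) :=
  antitone_nat_of_succ_le (fun i => π.col_decr i j)

lemma row_antitone (π : PlanePartition) (i : ℕ) : Antitone (fun j => π.entry i j) :=
  antitone_nat_of_succ_le (fun j => π.row_decr i j)

lemma rowsupp_finite (π : PlanePartition) (i : ℕ) : {j | π.entry i j ≠ 0}.Finite := by
  have : {j | π.entry i j ≠ 0} ⊆ Prod.snd '' {p : ℕ × ℕ | π.entry p.1 p.2 ≠ 0} := by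
    intro j hj
    exact ⟨(i, j), hj, rfl⟩
  exact (π.finite_support.image Prod.snd).subset this

variable {n m : ℕ}

noncomputable def W (w : Fin n → Fin m) (q : ℕ) : ℕ :=
  if h : q < n then (w ⟨q, h⟩ : ℕ) else 0

/-- column `j` has a descent with value `q+1` at row `W w q`. -/
def Desc (w : Fin n → Fin m) (π : PlanePartition) (j q : ℕ) : Prop :=
  q < n ∧ π.entry (W w q) j = q + 1 ∧ π.entry (W w q + 1) j ≤ q

variable {w : Fin n → Fin m} {π : PlanePartition}

lemma dmat_set_finite (π : PlanePartition) (i p : ℕ) :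
    {j | π.entry i j = p + 1 ∧ π.entry (i + 1) j ≤ p}.Finite :=
  (rowsupp_finite π i).subset (fun x hx => by simp only [Set.mem_setOf_eq] at hx ⊢; omega)

lemma letter_of_desc (hrows : π.RowsLE m) (hent : π.EntriesLE n)
    (hD : ∀ i : Fin m, ∀ ℓ : Fin n, π.dmat i ℓ = if w ℓ = i then 1 else 0)
    {i p j : ℕ} (h1 : π.entry i j = p + 1) (h2 : π.entry (i + 1) j ≤ p) :
    Desc w π j p ∧ W w p = i := by
  have hp : p < n := by have := hent i j; omega
  have hi : i < m := by
    by_contra h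
    have := hrows i j (le_of_not_gt h); omega
  have hfin := dmat_set_finite π i p
  have hne : {j' | π.entry i j' = p + 1 ∧ π.entry (i + 1) j' ≤ p}.Nonempty := ⟨j, h1, h2⟩
  have hcard := hD ⟨i, hi⟩ ⟨p, hp⟩
  simp only [PlanePartition.dmat] at hcard
  by_cases hw : w ⟨p, hp⟩ = ⟨i, hi⟩
  · have hW : W w p = i := by simp [W, hp, hw]
    exact ⟨⟨hp, by rw [hW]; exact h1, by rw [hW]; exact h2⟩, hW⟩
  · exfalso
    rw [if_neg hw] at hcard
    have := (Set.ncard_eq_zero hfin).mp hcard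
    rw [this] at hne
    exact Set.not_nonempty_empty hne

lemma desc_unique (hrows : π.RowsLE m) (hent : π.EntriesLE n)
    (hD : ∀ i : Fin m, ∀ ℓ : Fin n, π.dmat i ℓ = if w ℓ = i then 1 else 0)
    {p j j' : ℕ} (h : Desc w π j p) (h' : Desc w π j' p) : j = j' := by
  by_contra hne
  set i := W w p with hi
  have hp : p < n := h.1
  have him : i < m := by
    by_contra hc
    have hz := hrows i j (le_of_not_gt hc)
    have hz2 := h.2.1
    rw [← hi] at hz2
    omega
  have hw : w ⟨p, hp⟩ = ⟨i, him⟩ := by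
    apply Fin.ext
    simp [hi, W, hp]
  have hcard := hD ⟨i, him⟩ ⟨p, hp⟩
  simp only [PlanePartition.dmat, if_pos hw] at hcard
  have hsub : ({j, j'} : Set ℕ) ⊆ {j'' | π.entry i j'' = p + 1 ∧ π.entry (i + 1) j'' ≤ p} := by
    intro x hx
    rcases hx with rfl | hx
    · exact ⟨h.2.1, h.2.2⟩
    · rcases hx with rfl
      exact ⟨h'.2.1, h'.2.2⟩
  have h2 : ({j, j'} : Set ℕ).ncard = 2 := Set.ncard_pair hne
  have := Set.ncard_le_ncard hsub (dmat_set_finite π i p)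
  omega

lemma descend (hrows : π.RowsLE m) (hent : π.EntriesLE n)
    (hD : ∀ i : Fin m, ∀ ℓ : Fin n, π.dmat i ℓ = if w ℓ = i then 1 else 0)
    {i j : ℕ} (hv : π.entry i j ≠ 0) :
    ∃ q, q + 1 = π.entry i j ∧ Desc w π j q ∧ i ≤ W w q := by
  set v := π.entry i j with hvdef
  set T := {t : ℕ | v ≤ π.entry t j} with hT
  have hBdd : BddAbove T := by
    refine ⟨m, fun t ht => ?_⟩
    by_contra hc
    have := hrows t j (by omega)
    simp only [hT, Set.mem_setOf_eq] at ht
    omega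
  have hmem : i ∈ T := le_refl v
  have hne : T.Nonempty := ⟨i, hmem⟩
  set i' := sSup T with hi'
  have hi'T : i' ∈ T := Nat.sSup_mem hne hBdd
  have hii' : i ≤ i' := le_csSup hBdd hmem
  have heq : π.entry i' j = v := le_antisymm (col_antitone π j hii') hi'T
  have hsucc : π.entry (i' + 1) j < v := by
    by_contra hc
    push_neg at hc
    have h1 : i' + 1 ∈ T := hc
    have := le_csSup hBdd h1
    omega
  have h1 : π.entry i' j = (v - 1) + 1 := by omega
  have h2 : π.entry (i' + 1) j ≤ v - 1 := by omega
  obtain ⟨hd, hW⟩ := letter_of_desc hrows hent hD h1 h2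
  exact ⟨v - 1, by omega, hd, by rw [hW]; exact hii'⟩

lemma chain (hrows : π.RowsLE m) (hent : π.EntriesLE n)
    (hD : ∀ i : Fin m, ∀ ℓ : Fin n, π.dmat i ℓ = if w ℓ = i then 1 else 0)
    (k r : ℕ) (hsupp : ∀ j, j < r → π.entry k j ≠ 0) :
    ∀ s, s ≤ r → ∃ g : ℕ → ℕ,
      (∀ a, a < s → Desc w π (r - s + a) (g a)) ∧
      (∀ a, a + 1 < s → g (a + 1) < g a ∧ W w (g (a + 1)) ≤ W w (g a)) ∧
      (∀ a, a < s → k ≤ W w (g a)) := by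
  intro s
  induction s with
  | zero =>
    intro _
    exact ⟨fun _ => 0, fun a ha => absurd ha (by omega),
      fun a ha => absurd ha (by omega), fun a ha => absurd ha (by omega)⟩
  | succ s ih =>
    intro hs
    rcases Nat.eq_zero_or_pos s with h0 | hpos
    · subst h0
      obtain ⟨q, hq1, hqd, hqW⟩ := descend hrows hent hD (hsupp (r - 1) (by omega))
      refine ⟨fun _ => q, ?_, ?_, ?_⟩
      · intro a ha
        have ha0 : a = 0 := by omega
        subst ha0
        have : r - 1 + 0 = r - 1 := by omega
        rw [this]
        exact hqd
      · intro a ha; omega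
      · intro a _; exact hqW
    · obtain ⟨g, hg1, hg2, hg3⟩ := ih (by omega)
      have hd0 : Desc w π (r - s + 0) (g 0) := hg1 0 hpos
      set i' := W w (g 0) with hi'
      have he : π.entry i' (r - s) = g 0 + 1 := by
        have := hd0.2.1
        simpa using this
      have hrow : g 0 + 1 ≤ π.entry i' (r - (s + 1)) := by
        calc g 0 + 1 = π.entry i' (r - s) := he.symm
        _ ≤ π.entry i' (r - (s + 1)) := row_antitone π i' (by omega)
      obtain ⟨q, hq1, hqd, hqW⟩ := descend hrows hent hD
        (show π.entry i' (r - (s + 1)) ≠ 0 by omega)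
      have hge : g 0 + 1 ≤ q + 1 := by omega
      have hgt : g 0 < q := by
        rcases Nat.lt_or_ge (g 0) q with h | h
        · exact h
        · exfalso
          have hqg : q = g 0 := by omega
          have hd0' : Desc w π (r - s) (g 0) := by simpa using hd0
          rw [hqg] at hqd
          have := desc_unique hrows hent hD hqd hd0'
          omega
      refine ⟨fun a => if a = 0 then q else g (a - 1), ?_, ?_, ?_⟩
      · intro a ha
        rcases Nat.eq_zero_or_pos a with rfl | hap
        · simpa using hqd
        · have h1 : a ≠ 0 := by omega
          simp only [if_neg h1]
          have := hg1 (a - 1) (by omega)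
          have harith : r - s + (a - 1) = r - (s + 1) + a := by omega
          rw [harith] at this
          exact this
      · intro a ha
        rcases Nat.eq_zero_or_pos a with rfl | hap
        · simp only [if_neg (by omega : (1:ℕ) ≠ 0), if_pos rfl]
          constructor
          · simpa using hgt
          · have : k ≤ i' := hg3 0 hpos
            calc W w (g (1 - 1)) = i' := by norm_num [hi']
            _ ≤ W w q := hqW
        · have h1 : a ≠ 0 := by omega
          have h2 : a + 1 ≠ 0 := by omega
          simp only [if_neg h1, if_neg h2]
          have := hg2 (a - 1) (by omega)
          have harith : a - 1 + 1 = a + 1 - 1 := by omega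
          rw [harith] at this
          exact this
      · intro a ha
        rcases Nat.eq_zero_or_pos a with rfl | hap
        · show k ≤ W w (if 0 = 0 then q else g (0 - 1))
          rw [if_pos rfl]
          have h3 : k ≤ i' := hg3 0 hpos
          omega
        · simp only [if_neg (by omega : a ≠ 0)]
          exact hg3 (a - 1) (by omega)

end Statement13Aux

/-- If `π = Φ⁻¹(D(w))`, i.e. `π` is the plane partition with at most
`m` rows and entries at most `n` whose descent matrix `Φ(π)` is the 0-1 matrix `D(w)`
of the word `w` (a `1` in row `w_i`, column `i`), then the shape of `π` is
`(L_m(w), L_{m-1}(w), …, L_1(w))`: the `k`-th row (0-indexed) of `π` has length the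
longest weakly increasing subsequence of `w` using letters `≥ k`. -/
theorem shape_eq_increasing_subsequences (n m : ℕ) (w : Fin n → Fin m)
    (π : PlanePartition) (hrows : π.RowsLE m) (hent : π.EntriesLE n)
    (hD : ∀ i : Fin m, ∀ ℓ : Fin n,
      π.dmat i ℓ = if w ℓ = i then 1 else 0) :
    ∀ k : Fin m, π.rowLen k = Lge w k := by
  classical
  intro k
  set S := {j : ℕ | π.entry (k : ℕ) j ≠ 0} with hSdef
  have hSfin : S.Finite := Statement13Aux.rowsupp_finite π k
  set r := S.ncard with hrdef
  have hsupp : ∀ j, j < r → π.entry (k : ℕ) j ≠ 0 := by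
    intro j hj
    by_contra hc
    have hsub : S ⊆ ↑(Finset.range j) := by
      intro x hx
      simp only [Finset.coe_range, Set.mem_Iio]
      by_contra hxc
      have h2 : π.entry (k : ℕ) x ≤ π.entry (k : ℕ) j :=
        Statement13Aux.row_antitone π (k : ℕ) (le_of_not_gt hxc)
      simp only [hSdef, Set.mem_setOf_eq] at hx
      omega
    have h3 := Set.ncard_le_ncard hsub (Finset.range j).finite_toSet
    rw [Set.ncard_coe_finset, Finset.card_range] at h3
    omega
  set M := {N : ℕ | ∃ t : Finset (Fin n), t.card = N ∧ (∀ a ∈ t, (k:ℕ) ≤ (w a : ℕ)) ∧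
    ∀ a ∈ t, ∀ b ∈ t, a ≤ b → w a ≤ w b} with hMdef
  have hbddM : BddAbove M := by
    refine ⟨n, fun N hN => ?_⟩
    obtain ⟨t, ht, -, -⟩ := hN
    calc N = t.card := ht.symm
    _ ≤ (Finset.univ : Finset (Fin n)).card := Finset.card_le_univ t
    _ = n := by simp
  have hub : ∀ N ∈ M, N ≤ r := by
    rintro N ⟨t, rfl, htk, hti⟩
    have hchoice : ∀ p : Fin n, ∃ j, π.entry (w p : ℕ) j = (p : ℕ) + 1 ∧
        π.entry ((w p : ℕ) + 1) j ≤ (p : ℕ) := by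
      intro p
      have h := hD (w p) p
      rw [if_pos rfl] at h
      simp only [PlanePartition.dmat] at h
      have h2 : ({j | π.entry (w p : ℕ) j = (p:ℕ) + 1 ∧
          π.entry ((w p : ℕ) + 1) j ≤ (p:ℕ)} : Set ℕ).Nonempty :=
        Set.nonempty_of_ncard_ne_zero (by rw [h]; exact one_ne_zero)
      exact h2
    choose φ hφ1 hφ2 using hchoice
    have hmaps : ∀ p ∈ t, φ p ∈ hSfin.toFinset := by
      intro p hp
      rw [Set.Finite.mem_toFinset]
      have h1 : (k:ℕ) ≤ (w p : ℕ) := htk p hp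
      have h2 := Statement13Aux.col_antitone π (φ p) h1
      have h3 := hφ1 p
      simp only [hSdef, Set.mem_setOf_eq]
      simp only at h2
      omega
    have hinj : Set.InjOn φ ↑t := by
      intro p hp p' hp' heq
      by_contra hne
      rcases lt_trichotomy (p:ℕ) (p':ℕ) with hlt | heq2 | hgt
      · have hle : (w p : ℕ) ≤ (w p' : ℕ) := hti p hp p' hp' (by rw [Fin.le_def]; omega)
        have h2 := Statement13Aux.col_antitone π (φ p) hle
        have e1 := hφ1 p
        have e2 := hφ1 p'
        rw [← heq] at e2
        simp only at h2
        omega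
      · exact hne (Fin.ext heq2)
      · have hle : (w p' : ℕ) ≤ (w p : ℕ) := hti p' hp' p hp (by rw [Fin.le_def]; omega)
        have h2 := Statement13Aux.col_antitone π (φ p) hle
        have e1 := hφ1 p
        have e2 := hφ1 p'
        rw [← heq] at e2
        simp only at h2
        omega
    calc t.card ≤ hSfin.toFinset.card := Finset.card_le_card_of_injOn φ hmaps hinj
    _ = r := (Set.ncard_eq_toFinset_card S hSfin).symm
  have hlow : r ∈ M := by
    rcases Nat.eq_zero_or_pos r with h0 | hr
    · rw [hMdef]
      exact ⟨∅, by simp [h0], by simp, by simp⟩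
    · obtain ⟨g, hg1, hg2, hg3⟩ := Statement13Aux.chain hrows hent hD k r hsupp r (le_refl r)
      have hg1' : ∀ a, a < r → Statement13Aux.Desc w π a (g a) := by
        intro a ha
        have h := hg1 a ha
        have harith : r - r + a = a := by omega
        rwa [harith] at h
      have hgn : ∀ a, a < r → g a < n := fun a ha => (hg1' a ha).1
      have hmono : ∀ d a, a + d < r →
          g (a + d) ≤ g a ∧ Statement13Aux.W w (g (a + d)) ≤ Statement13Aux.W w (g a) := by
        intro d
        induction d with
        | zero => intro a _; simp
        | succ d ihd =>
          intro a ha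
          have h1 := ihd a (by omega)
          have h2 := hg2 (a + d) (by omega)
          have e : a + (d + 1) = (a + d) + 1 := by omega
          rw [e]
          exact ⟨by omega, le_trans h2.2 h1.2⟩
      have hstrict : ∀ a b, a < b → b < r → g b < g a := by
        intro a b hab hbr
        have h1 := hmono (b - 1 - a) a (by omega)
        have h2 := hg2 (b - 1) (by omega)
        have e : a + (b - 1 - a) = b - 1 := by omega
        rw [e] at h1
        have e2 : b - 1 + 1 = b := by omega
        rw [e2] at h2
        omega
      have hWmono : ∀ a b, a ≤ b → b < r →
          Statement13Aux.W w (g b) ≤ Statement13Aux.W w (g a) := by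
        intro a b hab hbr
        have h1 := hmono (b - a) a (by omega)
        have e : a + (b - a) = b := by omega
        rw [e] at h1
        exact h1.2
      refine ⟨(Finset.range r).attach.image
        (fun a => (⟨g a.1, hgn a.1 (Finset.mem_range.mp a.2)⟩ : Fin n)), ?_, ?_, ?_⟩
      · rw [Finset.card_image_of_injOn, Finset.card_attach, Finset.card_range]
        intro a _ b _ heq
        simp only [Fin.mk.injEq] at heq
        apply Subtype.ext
        by_contra hne
        rcases lt_trichotomy a.1 b.1 with h | h | h
        · have := hstrict a.1 b.1 h (Finset.mem_range.mp b.2); omega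
        · exact hne h
        · have := hstrict b.1 a.1 h (Finset.mem_range.mp a.2); omega
      · intro a ha
        simp only [Finset.mem_image] at ha
        obtain ⟨x, -, rfl⟩ := ha
        have hx : x.1 < r := Finset.mem_range.mp x.2
        have h := hg3 x.1 hx
        rwa [Statement13Aux.W, dif_pos (hgn x.1 hx)] at h
      · intro a ha b hb hab
        simp only [Finset.mem_image] at ha hb
        obtain ⟨x, -, rfl⟩ := ha
        obtain ⟨y, -, rfl⟩ := hb
        have hx : x.1 < r := Finset.mem_range.mp x.2
        have hy : y.1 < r := Finset.mem_range.mp y.2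
        rw [Fin.mk_le_mk] at hab
        have hyx : y.1 ≤ x.1 := by
          by_contra hc
          have := hstrict x.1 y.1 (by omega) hy
          omega
        have h := hWmono y.1 x.1 hyx hx
        simp only [Statement13Aux.W] at h
        rw [dif_pos (hgn x.1 hx), dif_pos (hgn y.1 hy)] at h
        rw [Fin.le_def]
        exact h
  show S.ncard = sSup M
  exact le_antisymm (le_csSup hbddM hlow) (csSup_le ⟨r, hlow⟩ hub)
end

section
/- For a plane partition π ∈ PP(∞, n, m) with matrix D = Φ(π), the length of the first row of π equals the maximal weight of a down-right lattice path in D from (1,1) to (n,m), where the weight of a path is the sum of matrix entries along it and allowed steps are (i,j)→(i+1,j) and (i,j)→(i,j+1). -/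
open scoped BigOperators

namespace PPaux2
lemma sum_ncard_eq (S : ℕ → Set ℕ) (s : Finset ℕ)
    (hfin : ∀ t ∈ s, (S t).Finite)
    (hdisj : ∀ t ∈ s, ∀ t' ∈ s, t ≠ t' → Disjoint (S t) (S t')) :
    ∑ t ∈ s, (S t).ncard = (⋃ t ∈ s, S t).ncard := by
  classical
  induction s using Finset.induction_on with
  | empty => simp
  | @insert a s' ha ih =>
    rw [Finset.sum_insert ha]
    have hU : (⋃ t ∈ insert a s', S t) = S a ∪ ⋃ t ∈ s', S t := by
      simp [Set.biUnion_insert]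
    rw [hU]
    have hfin' : (⋃ t ∈ s', S t).Finite :=
      Set.Finite.biUnion s'.finite_toSet (fun t ht => hfin t (Finset.mem_insert_of_mem ht))
    have hd : Disjoint (S a) (⋃ t ∈ s', S t) := by
      rw [Set.disjoint_iff_inter_eq_empty]
      ext x
      simp only [Set.mem_inter_iff, Set.mem_iUnion, Set.mem_empty_iff_false, iff_false]
      rintro ⟨hxa, t, ht, hxt⟩
      have hne : a ≠ t := by rintro rfl; exact ha ht
      exact (hdisj a (Finset.mem_insert_self a s') t (Finset.mem_insert_of_mem ht) hne).le_bot
        ⟨hxa, hxt⟩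
    rw [Set.ncard_union_eq hd (hfin a (Finset.mem_insert_self a s')) hfin',
      ih (fun t ht => hfin t (Finset.mem_insert_of_mem ht))
        (fun t ht t' ht' h => hdisj t (Finset.mem_insert_of_mem ht) t' (Finset.mem_insert_of_mem ht') h)]
end PPaux2
namespace PPaux
open PlanePartition

lemma entry_anti_row (π : PlanePartition) (j : ℕ) : Antitone (fun i => π.entry i j) :=
  antitone_nat_of_succ_le (fun i => π.col_decr i j)

lemma entry_anti_col (π : PlanePartition) (i : ℕ) : Antitone (fun j => π.entry i j) :=
  antitone_nat_of_succ_le (fun j => π.row_decr i j)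

lemma row0_finite (π : PlanePartition) : {j : ℕ | π.entry 0 j ≠ 0}.Finite := by
  have hinj : Set.InjOn (fun j : ℕ => ((0 : ℕ), j)) {j | π.entry 0 j ≠ 0} := by
    intro a _ b _ hab; simpa using hab
  have hsub : (fun j : ℕ => ((0 : ℕ), j)) '' {j | π.entry 0 j ≠ 0} ⊆
      {p : ℕ × ℕ | π.entry p.1 p.2 ≠ 0} := by
    rintro p ⟨j, hj, rfl⟩; exact hj
  exact Set.Finite.of_finite_image (π.finite_support.subset hsub) hinj

lemma exists_row0_zero (π : PlanePartition) : ∃ j, π.entry 0 j = 0 := by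
  by_contra h
  push_neg at h
  have hfin := row0_finite π
  have huniv : {j : ℕ | π.entry 0 j ≠ 0} = Set.univ := by ext j; simp [h j]
  rw [huniv] at hfin
  exact Set.infinite_univ hfin

/-- the set of columns counted by `dmat π i ℓ`. -/
def Scell (π : PlanePartition) (i ℓ : ℕ) : Set ℕ :=
  {j | π.entry i j = ℓ + 1 ∧ π.entry (i + 1) j ≤ ℓ}

lemma dmat_eq_ncard (π : PlanePartition) (i ℓ : ℕ) :
    π.dmat i ℓ = (Scell π i ℓ).ncard := rfl

lemma Scell_subset (π : PlanePartition) (i ℓ : ℕ) :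
    Scell π i ℓ ⊆ {j : ℕ | π.entry 0 j ≠ 0} := by
  rintro j ⟨h1, _⟩
  have : π.entry i j ≤ π.entry 0 j := entry_anti_row π j (Nat.zero_le i)
  simp only [Set.mem_setOf_eq]
  omega

lemma Scell_finite (π : PlanePartition) (i ℓ : ℕ) : (Scell π i ℓ).Finite :=
  (row0_finite π).subset (Scell_subset π i ℓ)

section Path

variable (n m : ℕ) (f : ℕ → ℕ × ℕ)
  (hf0 : f 0 = (0, 0))
  (hstep : ∀ t, t + 1 ≤ n + m - 2 →
    f (t + 1) = ((f t).1 + 1, (f t).2) ∨ f (t + 1) = ((f t).1, (f t).2 + 1))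

include hf0 hstep in
lemma path_coord_sum : ∀ t, t ≤ n + m - 2 → (f t).1 + (f t).2 = t := by
  intro t
  induction t with
  | zero => intro _; rw [hf0]; rfl
  | succ t ih =>
    intro ht
    have h' := ih (by omega)
    rcases hstep t ht with h | h <;> rw [h] <;> simp <;> omega

include hf0 hstep in
lemma path_mono : ∀ s t, s ≤ t → t ≤ n + m - 2 →
    (f s).1 ≤ (f t).1 ∧ (f s).2 ≤ (f t).2 := by
  intro s t hst
  induction t with
  | zero => intro _; have : s = 0 := by omega
            subst this; exact ⟨le_refl _, le_refl _⟩
  | succ t ih =>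
    intro ht
    rcases Nat.eq_or_lt_of_le hst with h | h
    · subst h; exact ⟨le_refl _, le_refl _⟩
    · have h1 := ih (by omega) (by omega)
      rcases hstep t ht with h2 | h2 <;> rw [h2] <;> simp <;> omega

include hf0 hstep in
lemma path_disjoint (π : PlanePartition) : ∀ s t, s ≤ n + m - 2 → t ≤ n + m - 2 → s ≠ t →
    Disjoint (Scell π (f s).1 (f s).2) (Scell π (f t).1 (f t).2) := by
  have key : ∀ s t, s < t → t ≤ n + m - 2 →
      Disjoint (Scell π (f s).1 (f s).2) (Scell π (f t).1 (f t).2) := by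
    intro s t hst ht
    rw [Set.disjoint_iff_inter_eq_empty]
    ext j
    simp only [Set.mem_inter_iff, Set.mem_empty_iff_false, iff_false]
    rintro ⟨⟨hs1, hs2⟩, ⟨ht1, _⟩⟩
    obtain ⟨hm1, hm2⟩ := path_mono n m f hf0 hstep s t (le_of_lt hst) ht
    have hsums := path_coord_sum n m f hf0 hstep s (by omega)
    have hsumt := path_coord_sum n m f hf0 hstep t ht
    rcases Nat.eq_or_lt_of_le hm1 with h | h
    · -- same row, so entries equal, so ℓ equal, so s = t
      rw [← h] at ht1
      rw [hs1] at ht1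
      omega
    · -- (f t).1 ≥ (f s).1 + 1
      have : π.entry (f t).1 j ≤ π.entry ((f s).1 + 1) j :=
        entry_anti_row π j h
      omega
  intro s t hs ht hne
  rcases Nat.lt_or_ge s t with h | h
  · exact key s t h ht
  · exact (key t s (by omega) hs).symm

include hf0 hstep in
lemma path_weight_eq (π : PlanePartition) :
    ∑ t ∈ Finset.range (n + m - 1), π.dmat (f t).1 (f t).2 =
    (⋃ t ∈ Finset.range (n + m - 1), Scell π (f t).1 (f t).2).ncard := by
  have := PPaux2.sum_ncard_eq (fun t => Scell π (f t).1 (f t).2) (Finset.range (n + m - 1))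
    (fun t _ => Scell_finite π _ _)
    (fun t htm t' htm' hne => path_disjoint n m f hf0 hstep π t t'
      (by simp at htm; omega) (by simp at htm'; omega) hne)
  simpa [dmat_eq_ncard] using this

end Path
end PPaux
namespace PPaux
open PlanePartition

/-- the threshold sequence for picking descent cells, processing columns right to left. -/
noncomputable def Lseq (π : PlanePartition) (n N : ℕ) : ℕ → ℕ
  | 0 => 1
  | k + 1 =>
      π.entry (Nat.findGreatest (fun i => Lseq π n N k ≤ π.entry i (N - 1 - k)) n) (N - 1 - k)

/-- the row of the pick for column `N-1-k`. -/
noncomputable def Iseq (π : PlanePartition) (n N : ℕ) (k : ℕ) : ℕ :=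
  Nat.findGreatest (fun i => Lseq π n N k ≤ π.entry i (N - 1 - k)) n

lemma Lseq_succ (π : PlanePartition) (n N k : ℕ) :
    Lseq π n N (k + 1) = π.entry (Iseq π n N k) (N - 1 - k) := rfl

section Build
variable (π : PlanePartition) (n m N : ℕ)
  (hn : 1 ≤ n) (hrows : π.RowsLE n) (hent : π.EntriesLE m)
  (hNlt : ∀ j, j < N → π.entry 0 j ≠ 0)

include hNlt in
lemma Lseq_main : ∀ k, k < N → Lseq π n N k ≤ π.entry 0 (N - 1 - k) ∧ 1 ≤ Lseq π n N k := by
  intro k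
  induction k with
  | zero =>
    intro hk
    refine ⟨?_, le_refl _⟩
    have := hNlt (N - 1 - 0) (by omega)
    show 1 ≤ π.entry 0 (N - 1 - 0)
    omega
  | succ k ih =>
    intro hk
    obtain ⟨h1, h2⟩ := ih (by omega)
    have hspec : Lseq π n N k ≤ π.entry (Iseq π n N k) (N - 1 - k) :=
      Nat.findGreatest_spec (P := fun i => Lseq π n N k ≤ π.entry i (N - 1 - k))
        (Nat.zero_le n) h1
    rw [Lseq_succ]
    constructor
    · calc π.entry (Iseq π n N k) (N - 1 - k)
          ≤ π.entry (Iseq π n N k) (N - 1 - (k + 1)) :=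
            entry_anti_col π _ (by omega)
        _ ≤ π.entry 0 (N - 1 - (k + 1)) := entry_anti_row π _ (Nat.zero_le _)
    · exact le_trans h2 hspec

include hNlt in
lemma Lseq_le_succ : ∀ k, k < N → Lseq π n N k ≤ Lseq π n N (k + 1) := by
  intro k hk
  obtain ⟨h1, _⟩ := Lseq_main π n N hNlt k hk
  exact Nat.findGreatest_spec (P := fun i => Lseq π n N k ≤ π.entry i (N - 1 - k))
    (Nat.zero_le n) h1

include hNlt in
lemma Lseq_pos : ∀ k, k ≤ N → 1 ≤ Lseq π n N k := by
  intro k hk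
  match k, hk with
  | 0, _ => exact le_refl _
  | (k+1), hk =>
    exact le_trans (Lseq_main π n N hNlt k (by omega)).2
      (Lseq_le_succ π n N hNlt k (by omega))

include hrows hNlt in
lemma Iseq_lt : ∀ k, k < N → Iseq π n N k < n := by
  intro k hk
  have h1 := Lseq_le_succ π n N hNlt k hk
  have h2 := Lseq_pos π n N hNlt k (le_of_lt hk)
  rw [Lseq_succ] at h1
  by_contra h
  push_neg at h
  have := hrows (Iseq π n N k) (N - 1 - k) h
  omega

include hn hrows hNlt in
lemma Iseq_marked : ∀ k, k < N → π.entry (Iseq π n N k + 1) (N - 1 - k) < Lseq π n N k := by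
  intro k hk
  have hlt := Iseq_lt π n N hrows hNlt k hk
  have h2 : ¬ (Lseq π n N k ≤ π.entry (Iseq π n N k + 1) (N - 1 - k)) :=
    Nat.findGreatest_is_greatest (P := fun i => Lseq π n N k ≤ π.entry i (N - 1 - k))
      (k := Iseq π n N k + 1) (Nat.lt_succ_self _) (by omega : Iseq π n N k + 1 ≤ n)
  omega

include hn hrows hNlt in
lemma pick_mem_Scell : ∀ k, k < N →
    (N - 1 - k) ∈ Scell π (Iseq π n N k) (Lseq π n N (k + 1) - 1) := by
  intro k hk
  have h1 := Lseq_le_succ π n N hNlt k hk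
  have h2 := Lseq_pos π n N hNlt k (le_of_lt hk)
  have h3 := Iseq_marked π n N hn hrows hNlt k hk
  rw [Lseq_succ] at h1
  constructor
  · rw [Lseq_succ]; omega
  · rw [Lseq_succ]
    omega

include hNlt in
lemma Iseq_mono : ∀ k k', k ≤ k' → k' < N → Iseq π n N k ≤ Iseq π n N k' := by
  intro k k' hkk'
  induction k' with
  | zero => intro _; have : k = 0 := by omega
            subst this; exact le_refl _
  | succ k' ih =>
    intro hk'
    rcases Nat.eq_or_lt_of_le hkk' with h | h
    · subst h; exact le_refl _
    · refine le_trans (ih (by omega) (by omega)) ?_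
      -- Iseq k' ≤ Iseq (k'+1)
      apply Nat.le_findGreatest
      · exact Nat.findGreatest_le n
      · show Lseq π n N (k' + 1) ≤ π.entry (Iseq π n N k') (N - 1 - (k' + 1))
        rw [Lseq_succ]
        exact entry_anti_col π _ (by omega)

include hNlt in
lemma Lseq_mono : ∀ k k', k ≤ k' → k' ≤ N → Lseq π n N k ≤ Lseq π n N k' := by
  intro k k' hkk'
  induction k' with
  | zero => intro _; have : k = 0 := by omega
            subst this; exact le_refl _
  | succ k' ih =>
    intro hk'
    rcases Nat.eq_or_lt_of_le hkk' with h | h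
    · subst h; exact le_refl _
    · exact le_trans (ih (by omega) (by omega)) (Lseq_le_succ π n N hNlt k' (by omega))

end Build
end PPaux
namespace PPaux
open PlanePartition

/-- the first coordinate of the constructed optimal path at time `t`. -/
noncomputable def apath (π : PlanePartition) (n m N t : ℕ) : ℕ :=
  max (t - (m - 1))
    ((Finset.range N).sup (fun k => min (Iseq π n N k) (t - (Lseq π n N (k + 1) - 1))))

section PathBuild
variable (π : PlanePartition) (n m N : ℕ)
  (hn : 1 ≤ n) (hm : 1 ≤ m) (hrows : π.RowsLE n) (hent : π.EntriesLE m)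
  (hNlt : ∀ j, j < N → π.entry 0 j ≠ 0)

lemma apath_zero : apath π n m N 0 = 0 := by
  apply Nat.le_antisymm
  · apply max_le
    · omega
    · apply Finset.sup_le
      intro k _
      exact le_trans (min_le_right _ _) (by omega)
  · exact Nat.zero_le _

lemma apath_le_self (t : ℕ) : apath π n m N t ≤ t := by
  apply max_le
  · omega
  · apply Finset.sup_le
    intro k _
    exact le_trans (min_le_right _ _) (by omega)

lemma apath_mono : Monotone (apath π n m N) := by
  intro s t hst
  apply max_le
  · exact le_trans (by omega) (le_max_left _ _)
  · apply Finset.sup_le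
    intro k hk
    refine le_trans ?_ (le_max_right _ _)
    refine le_trans (min_le_min (le_refl _) (by omega : s - (Lseq π n N (k + 1) - 1) ≤ t - (Lseq π n N (k + 1) - 1)))
      (Finset.le_sup (f := fun k => min (Iseq π n N k) (t - (Lseq π n N (k + 1) - 1))) hk)

lemma apath_succ_le (t : ℕ) : apath π n m N (t + 1) ≤ apath π n m N t + 1 := by
  apply max_le
  · have : t - (m - 1) ≤ apath π n m N t := le_max_left _ _
    omega
  · apply Finset.sup_le
    intro k hk
    have h1 : min (Iseq π n N k) (t - (Lseq π n N (k + 1) - 1)) ≤ apath π n m N t :=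
      le_trans (Finset.le_sup (f := fun k => min (Iseq π n N k) (t - (Lseq π n N (k + 1) - 1))) hk)
        (le_max_right _ _)
    have h2 : min (Iseq π n N k) (t + 1 - (Lseq π n N (k + 1) - 1)) ≤
        min (Iseq π n N k) (t - (Lseq π n N (k + 1) - 1)) + 1 := by
      rcases min_cases (Iseq π n N k) (t + 1 - (Lseq π n N (k + 1) - 1)) with ⟨h, _⟩ | ⟨h, _⟩ <;>
        rcases min_cases (Iseq π n N k) (t - (Lseq π n N (k + 1) - 1)) with ⟨h', _⟩ | ⟨h', _⟩ <;>
        omega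
    omega

include hn hm hrows hNlt in
lemma apath_last : apath π n m N (n + m - 2) = n - 1 := by
  apply Nat.le_antisymm
  · apply max_le
    · omega
    · apply Finset.sup_le
      intro k hk
      have := Iseq_lt π n N hrows hNlt k (Finset.mem_range.mp hk)
      exact le_trans (min_le_left _ _) (by omega)
  · refine le_trans (by omega) (le_max_left _ _)

include hn hm hrows hent hNlt in
lemma apath_pick (k : ℕ) (hk : k < N) :
    apath π n m N (Iseq π n N k + (Lseq π n N (k + 1) - 1)) = Iseq π n N k := by
  set ℓk := Lseq π n N (k + 1) - 1 with hℓk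
  have hLk1 : 1 ≤ Lseq π n N (k + 1) := Lseq_pos π n N hNlt (k + 1) (by omega)
  have hLkm : Lseq π n N (k + 1) ≤ m := by
    rw [Lseq_succ]; exact hent _ _
  apply Nat.le_antisymm
  · apply max_le
    · omega
    · apply Finset.sup_le
      intro k' hk'
      rw [Finset.mem_range] at hk'
      rcases Nat.le_total k' k with h | h
      · exact le_trans (min_le_left _ _) (Iseq_mono π n N hNlt k' k h hk)
      · have hI : Iseq π n N k ≤ Iseq π n N k' := Iseq_mono π n N hNlt k k' h hk'
        have hL : Lseq π n N (k + 1) ≤ Lseq π n N (k' + 1) :=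
          Lseq_mono π n N hNlt (k + 1) (k' + 1) (by omega) (by omega)
        refine le_trans (min_le_right _ _) ?_
        omega
  · refine le_trans ?_ (le_max_right _ _)
    refine le_trans ?_ (Finset.le_sup (Finset.mem_range.mpr hk))
    simp only [← hℓk]
    omega

end PathBuild
end PPaux
/-- For `π ∈ PP(∞, n, m)` with `D = Φ(π)`, the length of the first
row of `π` is the maximal weight of a down-right lattice path in `D` from the top-left
corner `(1,1)` to the bottom-right corner `(n,m)` (0-indexed: from `(0,0)` to
`(n-1, m-1)`, with steps increasing one coordinate by `1`). -/
theorem first_row_eq_max_path_weight (n m : ℕ) (hn : 1 ≤ n) (hm : 1 ≤ m)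
    (π : PlanePartition) (hrows : π.RowsLE n) (hent : π.EntriesLE m) :
    π.rowLen 0 =
    sSup {W : ℕ | ∃ f : ℕ → ℕ × ℕ, f 0 = (0, 0) ∧ f (n + m - 2) = (n - 1, m - 1) ∧
      (∀ t, t + 1 ≤ n + m - 2 →
        f (t + 1) = ((f t).1 + 1, (f t).2) ∨ f (t + 1) = ((f t).1, (f t).2 + 1)) ∧
      W = ∑ t ∈ Finset.range (n + m - 1), π.dmat (f t).1 (f t).2} := by
  classical
  open PPaux in
  set N := Nat.find (exists_row0_zero π) with hNdef
  have hNspec : π.entry 0 N = 0 := Nat.find_spec (exists_row0_zero π)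
  have hNlt : ∀ j, j < N → π.entry 0 j ≠ 0 := by
    intro j hj
    rw [hNdef] at hj
    exact Nat.find_min (exists_row0_zero π) hj
  have hsupp : {j : ℕ | π.entry 0 j ≠ 0} = Set.Iio N := by
    ext j
    simp only [Set.mem_setOf_eq, Set.mem_Iio]
    constructor
    · intro hj
      by_contra h
      push_neg at h
      exact hj (le_antisymm (le_trans (entry_anti_col π 0 h) (le_of_eq hNspec)) (Nat.zero_le _))
    · exact hNlt j
  have hrl : π.rowLen 0 = N := by
    rw [PlanePartition.rowLen, hsupp, ← Finset.coe_range, Set.ncard_coe_finset,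
      Finset.card_range]
  rw [hrl]
  set S := {W : ℕ | ∃ f : ℕ → ℕ × ℕ, f 0 = (0, 0) ∧ f (n + m - 2) = (n - 1, m - 1) ∧
      (∀ t, t + 1 ≤ n + m - 2 →
        f (t + 1) = ((f t).1 + 1, (f t).2) ∨ f (t + 1) = ((f t).1, (f t).2 + 1)) ∧
      W = ∑ t ∈ Finset.range (n + m - 1), π.dmat (f t).1 (f t).2} with hSdef
  -- upper bound
  have hub : ∀ W ∈ S, W ≤ N := by
    rintro W ⟨f, hf0, hflast, hstep, rfl⟩
    rw [path_weight_eq n m f hf0 hstep π]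
    have hsub : (⋃ t ∈ Finset.range (n + m - 1), Scell π (f t).1 (f t).2) ⊆ Set.Iio N := by
      refine Set.iUnion₂_subset ?_
      intro t _
      rw [← hsupp]
      exact Scell_subset π _ _
    calc (⋃ t ∈ Finset.range (n + m - 1), Scell π (f t).1 (f t).2).ncard
        ≤ (Set.Iio N).ncard := Set.ncard_le_ncard hsub (Set.finite_Iio N)
      _ = N := by rw [← Finset.coe_range, Set.ncard_coe_finset, Finset.card_range]
  -- membership
  have hmem : N ∈ S := by
    set f := fun t => (apath π n m N t, t - apath π n m N t) with hfdef
    have hf0 : f 0 = ((0 : ℕ), (0 : ℕ)) := by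
      show (apath π n m N 0, 0 - apath π n m N 0) = _
      rw [apath_zero]
    have hstep : ∀ t, t + 1 ≤ n + m - 2 →
        f (t + 1) = ((f t).1 + 1, (f t).2) ∨ f (t + 1) = ((f t).1, (f t).2 + 1) := by
      intro t ht
      have h1 := apath_mono π n m N (by omega : t ≤ t + 1)
      have h2 := apath_succ_le π n m N t
      have h3 := apath_le_self π n m N t
      rcases (by omega : apath π n m N (t + 1) = apath π n m N t + 1 ∨
          apath π n m N (t + 1) = apath π n m N t) with h | h
      · left
        show (apath π n m N (t + 1), t + 1 - apath π n m N (t + 1)) =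
          (apath π n m N t + 1, t - apath π n m N t)
        rw [h]
        have h4 : t + 1 - (apath π n m N t + 1) = t - apath π n m N t := by omega
        rw [h4]
      · right
        show (apath π n m N (t + 1), t + 1 - apath π n m N (t + 1)) =
          (apath π n m N t, t - apath π n m N t + 1)
        rw [h]
        have h4 : t + 1 - apath π n m N t = t - apath π n m N t + 1 := by omega
        rw [h4]
    refine ⟨f, hf0, ?_, hstep, ?_⟩
    · show (apath π n m N (n + m - 2), n + m - 2 - apath π n m N (n + m - 2)) = _
      rw [apath_last π n m N hn hm hrows hNlt]
      have h1 : n + m - 2 - (n - 1) = m - 1 := by omega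
      rw [h1]
    · rw [path_weight_eq n m f hf0 hstep π]
      have hU : (⋃ t ∈ Finset.range (n + m - 1), Scell π (f t).1 (f t).2) = Set.Iio N := by
        apply Set.Subset.antisymm
        · refine Set.iUnion₂_subset ?_
          intro t _
          rw [← hsupp]
          exact Scell_subset π _ _
        · intro j hj
          rw [Set.mem_Iio] at hj
          set k := N - 1 - j with hkdef
          have hkN : k < N := by omega
          have hjk : N - 1 - k = j := by omega
          set ℓk := Lseq π n N (k + 1) - 1 with hℓdef
          set Tk := Iseq π n N k + ℓk with hTdef
          have hIlt : Iseq π n N k < n := Iseq_lt π n N hrows hNlt k hkN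
          have hLle : Lseq π n N (k + 1) ≤ m := by rw [Lseq_succ]; exact hent _ _
          have hLpos : 1 ≤ Lseq π n N (k + 1) := Lseq_pos π n N hNlt (k + 1) (by omega)
          have hTle : Tk ≤ n + m - 2 := by omega
          have hfT : f Tk = (Iseq π n N k, ℓk) := by
            show (apath π n m N Tk, Tk - apath π n m N Tk) = _
            rw [hTdef, apath_pick π n m N hn hm hrows hent hNlt k hkN]
            simp
          rw [Set.mem_iUnion₂]
          refine ⟨Tk, Finset.mem_range.mpr (by omega), ?_⟩
          rw [hfT]
          have hpick := pick_mem_Scell π n N hn hrows hNlt k hkN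
          rw [hjk] at hpick
          exact hpick
      rw [hU, ← Finset.coe_range, Set.ncard_coe_finset, Finset.card_range]
  -- conclude
  apply le_antisymm
  · exact le_csSup ⟨N, hub⟩ hmem
  · exact csSup_le ⟨N, hmem⟩ hub
end

section
/- For any α ∈ ℕ^m, the number of plane partitions with at most n rows and entries at most m in which entry i appears in exactly α_i columns equals ∏_{i=1}^m binom(n + α_i − 1, α_i). -/
open scoped BigOperators

section DcardAux

lemma mem_iff_lt_ncard_of_lower {S : Set ℕ} (hfin : S.Finite)
    (hdown : ∀ a b : ℕ, a ≤ b → b ∈ S → a ∈ S) (x : ℕ) : x ∈ S ↔ x < S.ncard := by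
  constructor
  · intro hx
    have h1 : Set.Iic x ⊆ S := fun a ha => hdown a x ha hx
    have h2 := Set.ncard_le_ncard h1 hfin
    have h3 : (Set.Iic x).ncard = x + 1 := by
      rw [← Finset.coe_Iic, Set.ncard_coe_finset, Nat.card_Iic]
    omega
  · intro hx
    by_contra hmem
    have h1 : S ⊆ Set.Iio x := by
      intro a ha
      by_contra hax
      simp only [Set.mem_Iio, not_lt] at hax
      exact hmem (hdown x a hax ha)
    have h2 := Set.ncard_le_ncard h1 (Set.finite_Iio x)
    have h3 : (Set.Iio x).ncard = x := by
      rw [← Finset.coe_Iio, Set.ncard_coe_finset, Nat.card_Iio]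
    omega

namespace PlanePartition

lemma entry_anti_row (π : PlanePartition) (i : ℕ) : Antitone (fun j => π.entry i j) :=
  antitone_nat_of_succ_le (fun j => π.row_decr i j)

lemma entry_anti_col (π : PlanePartition) (j : ℕ) : Antitone (fun i => π.entry i j) :=
  antitone_nat_of_succ_le (fun i => π.col_decr i j)

lemma row_finite (π : PlanePartition) (i ℓ : ℕ) : {j | ℓ + 1 ≤ π.entry i j}.Finite := by
  have hsub : {j | ℓ + 1 ≤ π.entry i j} ⊆ (fun j => (i, j)) ⁻¹' {p : ℕ × ℕ | π.entry p.1 p.2 ≠ 0} := by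
    intro j hj
    simp only [Set.mem_setOf_eq] at hj
    simp only [Set.mem_preimage, Set.mem_setOf_eq]
    omega
  exact (π.finite_support.preimage
    (fun a _ b _ h => by simpa using congrArg Prod.snd h)).subset hsub

/-- the threshold matrix: `Nmat π i ℓ = #{j | π i j ≥ ℓ+1}`. -/
noncomputable def Nmat (π : PlanePartition) (i ℓ : ℕ) : ℕ :=
  {j | ℓ + 1 ≤ π.entry i j}.ncard

lemma lt_Nmat_iff (π : PlanePartition) (i ℓ j : ℕ) :
    j < π.Nmat i ℓ ↔ ℓ + 1 ≤ π.entry i j := by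
  rw [Nmat, ← mem_iff_lt_ncard_of_lower (π.row_finite i ℓ)
    (fun a b hab hb => le_trans hb (π.entry_anti_row i hab))]
  rfl

lemma Nmat_anti_col (π : PlanePartition) (ℓ : ℕ) : Antitone (fun i => π.Nmat i ℓ) := by
  apply antitone_nat_of_succ_le
  intro i
  apply Set.ncard_le_ncard _ (π.row_finite i ℓ)
  intro j hj
  exact le_trans hj (π.col_decr i j)

lemma Nmat_anti_row (π : PlanePartition) (i : ℕ) : Antitone (fun ℓ => π.Nmat i ℓ) := by
  apply antitone_nat_of_succ_le
  intro ℓ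
  apply Set.ncard_le_ncard _ (π.row_finite i ℓ)
  intro j hj
  simp only [Set.mem_setOf_eq] at hj ⊢
  omega

lemma Nmat_zero_of_rows {π : PlanePartition} {n : ℕ} (hR : π.RowsLE n) {i : ℕ} (hi : n ≤ i)
    (ℓ : ℕ) : π.Nmat i ℓ = 0 := by
  have : {j | ℓ + 1 ≤ π.entry i j} = ∅ := by
    ext j; simp only [Set.mem_setOf_eq, Set.mem_empty_iff_false, iff_false, not_le, hR i j hi]
    omega
  rw [Nmat, this, Set.ncard_empty]

lemma Nmat_zero_of_entries {π : PlanePartition} {m : ℕ} (hE : π.EntriesLE m) {ℓ : ℕ} (hℓ : m ≤ ℓ)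
    (i : ℕ) : π.Nmat i ℓ = 0 := by
  have : {j | ℓ + 1 ≤ π.entry i j} = ∅ := by
    ext j
    simp only [Set.mem_setOf_eq, Set.mem_empty_iff_false, iff_false, not_le]
    have := hE i j
    omega
  rw [Nmat, this, Set.ncard_empty]

end PlanePartition

end DcardAux
namespace PlanePartition

lemma ext_entry {π π' : PlanePartition} (h : π.entry = π'.entry) : π = π' := by
  cases π; cases π'; simpa using h

variable (n m : ℕ)

/-- reconstruct a plane partition from a threshold matrix. -/
noncomputable def ofN (N : ℕ → ℕ → ℕ)
    (hcol : ∀ i ℓ, N (i + 1) ℓ ≤ N i ℓ) (hrow : ∀ i ℓ, N i (ℓ + 1) ≤ N i ℓ)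
    (hn : ∀ i ℓ, n ≤ i → N i ℓ = 0) (hm : ∀ i ℓ, m ≤ ℓ → N i ℓ = 0) : PlanePartition where
  entry i j := {ℓ | j < N i ℓ}.ncard
  row_decr i j := by
    apply Set.ncard_le_ncard
    · intro ℓ hℓ
      simp only [Set.mem_setOf_eq] at hℓ ⊢
      omega
    · apply Set.Finite.subset (Set.finite_Iio m)
      intro ℓ hℓ
      simp only [Set.mem_setOf_eq] at hℓ
      by_contra hc
      simp only [Set.mem_Iio, not_lt] at hc
      rw [hm i ℓ hc] at hℓ
      omega
  col_decr i j := by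
    apply Set.ncard_le_ncard
    · intro ℓ hℓ
      simp only [Set.mem_setOf_eq] at hℓ ⊢
      exact lt_of_lt_of_le hℓ (hcol i ℓ)
    · apply Set.Finite.subset (Set.finite_Iio m)
      intro ℓ hℓ
      simp only [Set.mem_setOf_eq] at hℓ
      by_contra hc
      simp only [Set.mem_Iio, not_lt] at hc
      rw [hm i ℓ hc] at hℓ
      omega
  finite_support := by
    apply Set.Finite.subset ((Set.finite_Iio n).prod (Set.finite_Iio (N 0 0)))
    rintro ⟨i, j⟩ hp
    simp only [Set.mem_setOf_eq] at hp
    have hne : {ℓ | j < N i ℓ}.Nonempty := by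
      by_contra hc
      rw [Set.not_nonempty_iff_eq_empty] at hc
      rw [hc, Set.ncard_empty] at hp
      exact hp rfl
    obtain ⟨ℓ, hℓ⟩ := hne
    simp only [Set.mem_setOf_eq] at hℓ
    have hanti_col : Antitone (fun i => N i ℓ) := antitone_nat_of_succ_le (fun i => hcol i ℓ)
    have hanti_row : Antitone (fun ℓ' => N i ℓ') := antitone_nat_of_succ_le (fun ℓ' => hrow i ℓ')
    constructor
    · simp only [Set.mem_Iio]
      by_contra hc
      simp only [not_lt] at hc
      rw [hn i ℓ hc] at hℓ
      omega
    · simp only [Set.mem_Iio]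
      have h1 : N i ℓ ≤ N i 0 := hanti_row (Nat.zero_le ℓ)
      have h2 : N i 0 ≤ N 0 0 :=
        (antitone_nat_of_succ_le (fun i' => hcol i' 0) : Antitone fun i' => N i' 0) (Nat.zero_le i)
      omega

variable {n m}

lemma ofN_entry_le (N : ℕ → ℕ → ℕ) (hcol) (hrow) (hn) (hm) (i j : ℕ) :
    (ofN n m N hcol hrow hn hm).entry i j ≤ m := by
  show Set.ncard _ ≤ m
  calc {ℓ | j < N i ℓ}.ncard ≤ (Set.Iio m).ncard := by
        apply Set.ncard_le_ncard _ (Set.finite_Iio m)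
        intro ℓ hℓ
        simp only [Set.mem_setOf_eq] at hℓ
        simp only [Set.mem_Iio]
        by_contra hc
        simp only [not_lt] at hc
        rw [hm i ℓ hc] at hℓ
        omega
    _ = m := by rw [← Finset.coe_Iio, Set.ncard_coe_finset, Nat.card_Iio]

lemma ofN_rowsLE (N : ℕ → ℕ → ℕ) (hcol) (hrow) (hn) (hm) :
    (ofN n m N hcol hrow hn hm).RowsLE n := by
  intro i j hi
  show Set.ncard _ = 0
  have : {ℓ | j < N i ℓ} = ∅ := by
    ext ℓ
    simp only [Set.mem_setOf_eq, Set.mem_empty_iff_false, iff_false, not_lt, hn i ℓ hi]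
    omega
  rw [this, Set.ncard_empty]

lemma ofN_entriesLE (N : ℕ → ℕ → ℕ) (hcol) (hrow) (hn) (hm) :
    (ofN n m N hcol hrow hn hm).EntriesLE m :=
  fun i j => ofN_entry_le N hcol hrow hn hm i j

lemma Nmat_ofN (N : ℕ → ℕ → ℕ) (hcol) (hrow) (hn) (hm) (i ℓ : ℕ) :
    (ofN n m N hcol hrow hn hm).Nmat i ℓ = N i ℓ := by
  have hanti : Antitone (fun ℓ' => N i ℓ') := antitone_nat_of_succ_le (fun ℓ' => hrow i ℓ')
  have key : ∀ j, (ℓ + 1 ≤ (ofN n m N hcol hrow hn hm).entry i j ↔ j < N i ℓ) := by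
    intro j
    have hfin : {ℓ' | j < N i ℓ'}.Finite := by
      apply Set.Finite.subset (Set.finite_Iio m)
      intro ℓ' hℓ'
      simp only [Set.mem_setOf_eq] at hℓ'
      by_contra hc
      simp only [Set.mem_Iio, not_lt] at hc
      rw [hm i ℓ' hc] at hℓ'
      omega
    have hdown : ∀ a b : ℕ, a ≤ b → b ∈ {ℓ' | j < N i ℓ'} → a ∈ {ℓ' | j < N i ℓ'} := by
      intro a b hab hb
      simp only [Set.mem_setOf_eq] at hb ⊢
      exact lt_of_lt_of_le hb (hanti hab)
    have hmem := mem_iff_lt_ncard_of_lower hfin hdown ℓ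
    simp only [Set.mem_setOf_eq] at hmem
    show ℓ + 1 ≤ {ℓ' | j < N i ℓ'}.ncard ↔ j < N i ℓ
    rw [Nat.succ_le_iff, ← hmem]
  rw [Nmat]
  have hset : {j | ℓ + 1 ≤ (ofN n m N hcol hrow hn hm).entry i j} = Set.Iio (N i ℓ) := by
    ext j
    simp only [Set.mem_setOf_eq, Set.mem_Iio]
    exact key j
  rw [hset, ← Finset.coe_Iio, Set.ncard_coe_finset, Nat.card_Iio]

lemma ofN_Nmat (π : PlanePartition) (hcol) (hrow) (hn) (hm) :
    ofN n m π.Nmat hcol hrow hn hm = π := by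
  apply ext_entry
  funext i j
  show {ℓ | j < π.Nmat i ℓ}.ncard = π.entry i j
  have hset : {ℓ | j < π.Nmat i ℓ} = Set.Iio (π.entry i j) := by
    ext ℓ
    simp only [Set.mem_setOf_eq, Set.mem_Iio, π.lt_Nmat_iff]
    omega
  rw [hset, ← Finset.coe_Iio, Set.ncard_coe_finset, Nat.card_Iio]

end PlanePartition
section Counting

open Finset in
lemma ncard_iUnion_Ico (n : ℕ) (a b : ℕ → ℕ) (hab : ∀ i, a i ≤ b i)
    (ha : Antitone a) (hb : Antitone b) (hbn : ∀ i, n ≤ i → b i = 0) :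
    (⋃ i, Set.Ico (a i) (b i)).ncard
      = ∑ i ∈ Finset.range n, (b i - max (b (i + 1)) (a i)) := by
  have hset : (⋃ i, Set.Ico (a i) (b i))
      = ↑((Finset.range n).biUnion fun i => Finset.Ico (max (b (i + 1)) (a i)) (b i)) := by
    ext j
    simp only [Set.mem_iUnion, Set.mem_Ico, Finset.coe_biUnion, Finset.mem_coe,
      Finset.mem_range, Set.mem_iUnion, Finset.mem_Ico, Finset.coe_range, Set.mem_Iio]
    constructor
    · rintro ⟨i, hai, hbi⟩
      have hin : i < n := by
        by_contra hc
        simp only [not_lt] at hc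
        rw [hbn i hc] at hbi
        omega
      set s := (Finset.range n).filter (fun k => j < b k) with hs
      have hne : s.Nonempty := ⟨i, by simp [hs, hin, hbi]⟩
      set k := s.max' hne with hk
      have hkmem := s.max'_mem hne
      simp only [hs, Finset.mem_filter, Finset.mem_range] at hkmem
      have h1 : b (k + 1) ≤ j := by
        by_cases hkn : k + 1 < n
        · by_contra hc
          simp only [not_le] at hc
          have hmem2 : k + 1 ∈ s := by simp [hs, hkn, hc]
          have := s.le_max' _ hmem2
          omega
        · have := hbn (k + 1) (by omega)
          omega
      have h2 : a k ≤ j := by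
        have hik : i ≤ k := s.le_max' i (by simp [hs, hin, hbi])
        exact le_trans (ha hik) hai
      exact ⟨k, hkmem.1, max_le h1 h2, hkmem.2⟩
    · rintro ⟨i, _, ⟨hmax, hbi⟩⟩
      exact ⟨i, le_trans (le_max_right _ _) hmax, hbi⟩
  rw [hset, Set.ncard_coe_finset]
  rw [Finset.card_biUnion]
  · apply Finset.sum_congr rfl
    intro i _
    rw [Nat.card_Ico]
  · intro x hx y hy hxy
    have key : ∀ u v : ℕ, u < v →
        Disjoint (Finset.Ico (max (b (u + 1)) (a u)) (b u))
          (Finset.Ico (max (b (v + 1)) (a v)) (b v)) := by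
      intro u v huv
      apply Finset.disjoint_left.mpr
      intro j hju hjv
      simp only [Finset.mem_Ico, le_max_iff, max_le_iff] at hju hjv
      have h1 : b v ≤ b (u + 1) := hb huv
      omega
    rcases lt_or_gt_of_ne hxy with h | h
    · exact key x y h
    · exact (key y x h).symm

end Counting
namespace PlanePartition

lemma colCount_eq_sum {π : PlanePartition} {n m : ℕ} (hR : π.RowsLE n) (hE : π.EntriesLE m)
    (ℓ : ℕ) :
    π.colCount (ℓ + 1)
      = ∑ i ∈ Finset.range n, (π.Nmat i ℓ - max (π.Nmat (i + 1) ℓ) (π.Nmat i (ℓ + 1))) := by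
  have hset : {j : ℕ | ∃ i, π.entry i j = ℓ + 1}
      = ⋃ i, Set.Ico (π.Nmat i (ℓ + 1)) (π.Nmat i ℓ) := by
    ext j
    simp only [Set.mem_setOf_eq, Set.mem_iUnion, Set.mem_Ico]
    constructor
    · rintro ⟨i, hi⟩
      refine ⟨i, ?_, ?_⟩
      · by_contra hc
        simp only [not_le] at hc
        rw [π.lt_Nmat_iff] at hc
        omega
      · rw [π.lt_Nmat_iff]
        omega
    · rintro ⟨i, h1, h2⟩
      refine ⟨i, ?_⟩
      rw [π.lt_Nmat_iff] at h2
      have h3 : ¬ j < π.Nmat i (ℓ + 1) := by omega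
      rw [π.lt_Nmat_iff] at h3
      omega
  rw [colCount, hset]
  exact ncard_iUnion_Ico n _ _ (fun i => π.Nmat_anti_row i (by omega))
    (fun u v huv => π.Nmat_anti_col (ℓ + 1) huv)
    (fun u v huv => π.Nmat_anti_col ℓ huv)
    (fun i hi => Nmat_zero_of_rows hR hi ℓ)

end PlanePartition
section BuildN

/-- build a doubly-antitone matrix supported on `[0,n) × [0,m)` from its difference matrix. -/
def buildN (n m : ℕ) (M : ℕ → ℕ → ℕ) (i ℓ : ℕ) : ℕ :=
  if i < n ∧ ℓ < m then
    M i ℓ + max (buildN n m M (i + 1) ℓ) (buildN n m M i (ℓ + 1))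
  else 0
termination_by (n - i) + (m - ℓ)
decreasing_by all_goals omega

lemma buildN_of_lt {n m : ℕ} (M : ℕ → ℕ → ℕ) {i ℓ : ℕ} (hi : i < n) (hℓ : ℓ < m) :
    buildN n m M i ℓ = M i ℓ + max (buildN n m M (i + 1) ℓ) (buildN n m M i (ℓ + 1)) := by
  rw [buildN]
  simp [hi, hℓ]

lemma buildN_of_ge {n m : ℕ} (M : ℕ → ℕ → ℕ) {i ℓ : ℕ} (h : n ≤ i ∨ m ≤ ℓ) :
    buildN n m M i ℓ = 0 := by
  rw [buildN]
  have : ¬ (i < n ∧ ℓ < m) := by omega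
  simp [this]

lemma buildN_col_le {n m : ℕ} (M : ℕ → ℕ → ℕ) (i ℓ : ℕ) :
    buildN n m M (i + 1) ℓ ≤ buildN n m M i ℓ := by
  by_cases h : i < n ∧ ℓ < m
  · rw [buildN_of_lt M h.1 h.2]
    exact le_add_left (le_max_left _ _) |>.trans (le_refl _)
  · have h2 : n ≤ i + 1 ∨ m ≤ ℓ := by omega
    rw [buildN_of_ge M h2]
    exact Nat.zero_le _

lemma buildN_row_le {n m : ℕ} (M : ℕ → ℕ → ℕ) (i ℓ : ℕ) :
    buildN n m M i (ℓ + 1) ≤ buildN n m M i ℓ := by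
  by_cases h : i < n ∧ ℓ < m
  · rw [buildN_of_lt M h.1 h.2]
    calc buildN n m M i (ℓ + 1) ≤ max (buildN n m M (i + 1) ℓ) (buildN n m M i (ℓ + 1)) :=
          le_max_right _ _
      _ ≤ _ := Nat.le_add_left _ _
  · have h2 : n ≤ i ∨ m ≤ ℓ + 1 := by omega
    rw [buildN_of_ge M h2]
    exact Nat.zero_le _

/-- the difference matrix of a matrix. -/
def diffM (N : ℕ → ℕ → ℕ) (i ℓ : ℕ) : ℕ :=
  N i ℓ - max (N (i + 1) ℓ) (N i (ℓ + 1))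

lemma buildN_diffM {n m : ℕ} (N : ℕ → ℕ → ℕ)
    (hcol : ∀ i ℓ, N (i + 1) ℓ ≤ N i ℓ) (hrow : ∀ i ℓ, N i (ℓ + 1) ≤ N i ℓ)
    (hn : ∀ i ℓ, n ≤ i → N i ℓ = 0) (hm : ∀ i ℓ, m ≤ ℓ → N i ℓ = 0) (i ℓ : ℕ) :
    buildN n m (diffM N) i ℓ = N i ℓ := by
  have key : ∀ k i ℓ, (n - i) + (m - ℓ) ≤ k → buildN n m (diffM N) i ℓ = N i ℓ := by
    intro k
    induction k with
    | zero =>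
      intro i ℓ hk
      have hi : n ≤ i := by omega
      rw [buildN_of_ge _ (Or.inl hi), hn i ℓ hi]
    | succ k ih =>
      intro i ℓ hk
      by_cases h : i < n ∧ ℓ < m
      · rw [buildN_of_lt _ h.1 h.2, ih (i + 1) ℓ (by omega), ih i (ℓ + 1) (by omega), diffM]
        have h1 : N (i + 1) ℓ ≤ N i ℓ := hcol i ℓ
        have h2 : N i (ℓ + 1) ≤ N i ℓ := hrow i ℓ
        omega
      · rw [buildN_of_ge _ (by omega)]
        rcases (by omega : n ≤ i ∨ m ≤ ℓ) with h' | h'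
        · rw [hn i ℓ h']
        · rw [hm i ℓ h']
  exact key ((n - i) + (m - ℓ)) i ℓ le_rfl

lemma diffM_buildN {n m : ℕ} (M : ℕ → ℕ → ℕ) {i ℓ : ℕ} (hi : i < n) (hℓ : ℓ < m) :
    diffM (buildN n m M) i ℓ = M i ℓ := by
  rw [diffM, buildN_of_lt M hi hℓ]
  omega

end BuildN
section StarsBars

lemma sum_count_univ {n : ℕ} (s : Multiset (Fin n)) :
    ∑ i : Fin n, s.count i = Multiset.card s := by
  classical
  rw [← Multiset.toFinset_sum_count_eq s]
  symm
  apply Finset.sum_subset (Finset.subset_univ _)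
  intro x _ hx
  simpa [Multiset.count_eq_zero] using hx

lemma multiset_card_finset_sum {α β : Type*} (s : Finset β) (f : β → Multiset α) :
    Multiset.card (∑ b ∈ s, f b) = ∑ b ∈ s, Multiset.card (f b) := by
  induction s using Finset.cons_induction with
  | empty => simp
  | cons a s ha ih => simp [Finset.sum_cons, ih]

lemma card_fin_sum_eq (n k : ℕ) :
    Nat.card {v : Fin n → ℕ // ∑ i, v i = k} = (n + k - 1).choose k := by
  classical
  have hbij : Function.Bijective
      (fun s : Sym (Fin n) k => (⟨fun i => Multiset.count i s.1, by
        rw [sum_count_univ s.1, s.2]⟩ : {v : Fin n → ℕ // ∑ i, v i = k})) := by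
    constructor
    · rintro ⟨s, hs⟩ ⟨t, ht⟩ h
      simp only [Subtype.mk.injEq] at h ⊢
      ext a
      exact congrFun h a
    · rintro ⟨v, hv⟩
      refine ⟨⟨∑ i : Fin n, v i • ({i} : Multiset (Fin n)), ?_⟩, ?_⟩
      · rw [multiset_card_finset_sum]
        simp only [Multiset.card_nsmul, Multiset.card_singleton, smul_eq_mul, mul_one]
        exact hv
      · ext j
        simp only
        rw [Multiset.count_sum']
        simp only [Multiset.count_nsmul, Multiset.count_singleton, smul_eq_mul]
        rw [Finset.sum_eq_single j]
        · simp
        · intro b _ hbj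
          simp [Ne.symm hbj]
        · intro h
          exact absurd (Finset.mem_univ j) h
  rw [← Nat.card_eq_of_bijective _ hbij, Nat.card_eq_fintype_card,
    Sym.card_sym_eq_choose, Fintype.card_fin]

end StarsBars
section InvPP

/-- extend a `Fin m × Fin n` matrix by zero (note the transposed index order). -/
def extM (n m : ℕ) (M : Fin m → Fin n → ℕ) (i ℓ : ℕ) : ℕ :=
  if h : i < n ∧ ℓ < m then M ⟨ℓ, h.2⟩ ⟨i, h.1⟩ else 0

/-- the plane partition associated to a matrix. -/
noncomputable def invPP (n m : ℕ) (M : Fin m → Fin n → ℕ) : PlanePartition :=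
  PlanePartition.ofN n m (buildN n m (extM n m M))
    (buildN_col_le _) (buildN_row_le _)
    (fun _ _ hi => buildN_of_ge _ (Or.inl hi))
    (fun _ _ hℓ => buildN_of_ge _ (Or.inr hℓ))

lemma invPP_rowsLE (n m : ℕ) (M : Fin m → Fin n → ℕ) : (invPP n m M).RowsLE n :=
  PlanePartition.ofN_rowsLE _ _ _ _ _

lemma invPP_entriesLE (n m : ℕ) (M : Fin m → Fin n → ℕ) : (invPP n m M).EntriesLE m :=
  PlanePartition.ofN_entriesLE _ _ _ _ _

lemma invPP_Nmat (n m : ℕ) (M : Fin m → Fin n → ℕ) (i ℓ : ℕ) :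
    (invPP n m M).Nmat i ℓ = buildN n m (extM n m M) i ℓ :=
  PlanePartition.Nmat_ofN _ _ _ _ _ i ℓ

lemma diffM_invPP (n m : ℕ) (M : Fin m → Fin n → ℕ) (ℓ : Fin m) (i : Fin n) :
    diffM (invPP n m M).Nmat (i : ℕ) (ℓ : ℕ) = M ℓ i := by
  have h1 : diffM (invPP n m M).Nmat (i : ℕ) (ℓ : ℕ)
      = diffM (buildN n m (extM n m M)) (i : ℕ) (ℓ : ℕ) := by
    rw [diffM, diffM, invPP_Nmat, invPP_Nmat, invPP_Nmat]
  rw [h1, diffM_buildN _ i.2 ℓ.2, extM]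
  rw [dif_pos ⟨i.2, ℓ.2⟩]

lemma invPP_colCount (n m : ℕ) (M : Fin m → Fin n → ℕ) (ℓ : Fin m) :
    (invPP n m M).colCount ((ℓ : ℕ) + 1) = ∑ i : Fin n, M ℓ i := by
  rw [PlanePartition.colCount_eq_sum (invPP_rowsLE n m M) (invPP_entriesLE n m M) (ℓ : ℕ)]
  rw [← Fin.sum_univ_eq_sum_range (fun i => (invPP n m M).Nmat i (ℓ : ℕ)
    - max ((invPP n m M).Nmat (i + 1) (ℓ : ℕ)) ((invPP n m M).Nmat i ((ℓ : ℕ) + 1))) n]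
  apply Finset.sum_congr rfl
  intro i _
  have := diffM_invPP n m M ℓ i
  rw [diffM] at this
  exact this

lemma invPP_diffM {n m : ℕ} {π : PlanePartition} (hR : π.RowsLE n) (hE : π.EntriesLE m) :
    invPP n m (fun ℓ i => diffM π.Nmat (i : ℕ) (ℓ : ℕ)) = π := by
  have hcol' : ∀ i ℓ, π.Nmat (i + 1) ℓ ≤ π.Nmat i ℓ := fun i ℓ =>
    π.Nmat_anti_col ℓ (Nat.le_succ i)
  have hrow' : ∀ i ℓ, π.Nmat i (ℓ + 1) ≤ π.Nmat i ℓ := fun i ℓ =>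
    π.Nmat_anti_row i (Nat.le_succ ℓ)
  have hn' : ∀ i ℓ, n ≤ i → π.Nmat i ℓ = 0 := fun i ℓ hi =>
    PlanePartition.Nmat_zero_of_rows hR hi ℓ
  have hm' : ∀ i ℓ, m ≤ ℓ → π.Nmat i ℓ = 0 := fun i ℓ hℓ =>
    PlanePartition.Nmat_zero_of_entries hE hℓ i
  have hext : extM n m (fun ℓ i => diffM π.Nmat (i : ℕ) (ℓ : ℕ)) = diffM π.Nmat := by
    funext i ℓ
    rw [extM]
    split
    · rfl
    · rename_i h
      rw [diffM]
      rcases (by omega : n ≤ i ∨ m ≤ ℓ) with h' | h'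
      · rw [hn' i ℓ h']
        omega
      · rw [hm' i ℓ h']
        omega
  have hb : ∀ i ℓ, buildN n m (extM n m (fun ℓ i => diffM π.Nmat (i : ℕ) (ℓ : ℕ))) i ℓ
      = π.Nmat i ℓ := by
    intro i ℓ
    rw [hext]
    exact buildN_diffM π.Nmat hcol' hrow' hn' hm' i ℓ
  apply PlanePartition.ext_entry
  funext i j
  have lhs_eq : (invPP n m (fun ℓ i => diffM π.Nmat (i : ℕ) (ℓ : ℕ))).entry i j
      = {ℓ | j < buildN n m (extM n m (fun ℓ i => diffM π.Nmat (i : ℕ) (ℓ : ℕ))) i ℓ}.ncard :=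
    rfl
  rw [lhs_eq]
  have hset : {ℓ | j < buildN n m (extM n m (fun ℓ i => diffM π.Nmat (i : ℕ) (ℓ : ℕ))) i ℓ}
      = {ℓ | j < π.Nmat i ℓ} := by
    ext ℓ
    simp only [Set.mem_setOf_eq, hb]
  rw [hset]
  have h5 := PlanePartition.ofN_Nmat π hcol' hrow' hn' hm'
  calc {ℓ | j < π.Nmat i ℓ}.ncard
      = (PlanePartition.ofN n m π.Nmat hcol' hrow' hn' hm').entry i j := rfl
    _ = π.entry i j := by rw [h5]

end InvPP

/-- `D_α(∞, n, m) = Π_{i=1}^m binom(n + α_i - 1, α_i)`: the number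
of plane partitions with at most `n` rows and entries at most `m` in which the entry
`i` appears in exactly `α i` columns. -/
theorem Dcard_unbounded (n m : ℕ) (α : Fin m → ℕ) :
    Nat.card {π : PlanePartition // π.RowsLE n ∧ π.EntriesLE m ∧
        ∀ i : Fin m, π.colCount ((i : ℕ) + 1) = α i} =
    ∏ i : Fin m, Nat.choose (n + α i - 1) (α i) := by
  classical
  have hA : Nat.card {π : PlanePartition // π.RowsLE n ∧ π.EntriesLE m ∧
        ∀ i : Fin m, π.colCount ((i : ℕ) + 1) = α i}
      = Nat.card {M : Fin m → Fin n → ℕ // ∀ ℓ : Fin m, ∑ i : Fin n, M ℓ i = α ℓ} := by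
    apply Nat.card_eq_of_bijective
      (fun p => (⟨fun ℓ i => diffM p.1.Nmat (i : ℕ) (ℓ : ℕ), by
        intro ℓ
        rw [Fin.sum_univ_eq_sum_range (fun i => diffM p.1.Nmat i (ℓ : ℕ)) n]
        have h1 := PlanePartition.colCount_eq_sum p.2.1 p.2.2.1 (ℓ : ℕ)
        have h2 : ∑ i ∈ Finset.range n, diffM p.1.Nmat i (ℓ : ℕ)
            = ∑ i ∈ Finset.range n, (p.1.Nmat i (ℓ : ℕ)
              - max (p.1.Nmat (i + 1) (ℓ : ℕ)) (p.1.Nmat i ((ℓ : ℕ) + 1))) := by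
          apply Finset.sum_congr rfl
          intro i _
          rw [diffM]
        rw [h2, ← h1]
        exact p.2.2.2 ℓ⟩ :
        {M : Fin m → Fin n → ℕ // ∀ ℓ : Fin m, ∑ i : Fin n, M ℓ i = α ℓ}))
    rw [Function.bijective_iff_has_inverse]
    refine ⟨fun q => ⟨invPP n m q.1, invPP_rowsLE n m q.1, invPP_entriesLE n m q.1,
      fun ℓ => by rw [invPP_colCount n m q.1 ℓ]; exact q.2 ℓ⟩, ?_, ?_⟩
    · rintro ⟨π, hR, hE, hc⟩
      exact Subtype.ext (invPP_diffM hR hE)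
    · rintro ⟨M, hM⟩
      apply Subtype.ext
      funext ℓ i
      exact diffM_invPP n m M ℓ i
  rw [hA, Nat.card_congr (Equiv.subtypePiEquivPi
    (p := fun (ℓ : Fin m) (v : Fin n → ℕ) => ∑ i : Fin n, v i = α ℓ)), Nat.card_pi]
  exact Finset.prod_congr rfl fun ℓ _ => card_fin_sum_eq n (α ℓ)
end

section
/- The corner volume |·|_c is superadditive on plane partitions: for any plane partitions π, π′, |π + π′|_c ≥ |π|_c + |π′|_c, where (π + π′)_{ij} = π_{ij} + π′_{ij}; moreover |kπ|_c = k|π|_c for every k ∈ ℕ, and |π|_c = 0 implies π = 0. -/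
open scoped BigOperators

/-- Entrywise sum of plane partitions. -/
noncomputable instance : Add PlanePartition :=
  ⟨fun a b =>
    { entry := fun i j => a.entry i j + b.entry i j
      row_decr := fun i j => Nat.add_le_add (a.row_decr i j) (b.row_decr i j)
      col_decr := fun i j => Nat.add_le_add (a.col_decr i j) (b.col_decr i j)
      finite_support := (a.finite_support.union b.finite_support).subset
        (fun p hp => by
          simp only [Set.mem_setOf_eq, Set.mem_union] at *
          omega) }⟩

/-- Entrywise scaling of a plane partition by a natural number. -/
noncomputable instance : SMul ℕ PlanePartition :=
  ⟨fun k a =>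
    { entry := fun i j => k * a.entry i j
      row_decr := fun i j => Nat.mul_le_mul_left k (a.row_decr i j)
      col_decr := fun i j => Nat.mul_le_mul_left k (a.col_decr i j)
      finite_support := a.finite_support.subset
        (fun p hp => by
          simp only [Set.mem_setOf_eq] at *
          exact fun h => hp (by rw [h, Nat.mul_zero]) ) }⟩

lemma PlanePartition.des_finite (a : PlanePartition) : a.Des.Finite :=
  a.finite_support.subset (fun p hp => by
    simp only [Des, Set.mem_setOf_eq] at *; omega)

lemma PlanePartition.cvol_eq_sum (a : PlanePartition) (s : Finset (ℕ × ℕ))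
    (hs : a.Des = ↑s) : a.cvol = ∑ p ∈ s, a.entry p.1 p.2 := by
  rw [cvol, hs, finsum_mem_coe_finset]

lemma PlanePartition.add_entry (a b : PlanePartition) (i j : ℕ) :
    (a + b).entry i j = a.entry i j + b.entry i j := rfl

lemma PlanePartition.smul_entry (k : ℕ) (a : PlanePartition) (i j : ℕ) :
    (k • a).entry i j = k * a.entry i j := rfl


/-- The corner volume is superadditive, positively homogeneous
(`|kπ|_c = k |π|_c`), and vanishes only at the zero plane partition. -/
theorem cvol_antinorm :
    (∀ a b : PlanePartition, a.cvol + b.cvol ≤ (a + b).cvol) ∧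
    (∀ (k : ℕ) (a : PlanePartition), (k • a).cvol = k * a.cvol) ∧
    (∀ a : PlanePartition, a.cvol = 0 → ∀ i j, a.entry i j = 0) := by
  refine ⟨?_, ?_, ?_⟩
  · intro a b
    have hD : (a + b).Des = a.Des ∪ b.Des := by
      ext p
      simp only [PlanePartition.Des, Set.mem_setOf_eq, Set.mem_union,
        PlanePartition.add_entry]
      have := a.col_decr p.1 p.2
      have := b.col_decr p.1 p.2
      omega
    set sA := a.des_finite.toFinset with hsA
    set sB := b.des_finite.toFinset with hsB
    have hcA : a.Des = ↑sA := (a.des_finite.coe_toFinset).symm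
    have hcB : b.Des = ↑sB := (b.des_finite.coe_toFinset).symm
    have hcU : (a + b).Des = ↑(sA ∪ sB) := by
      rw [hD, Finset.coe_union, ← hcA, ← hcB]
    rw [(a + b).cvol_eq_sum _ hcU, a.cvol_eq_sum _ hcA, b.cvol_eq_sum _ hcB]
    simp only [PlanePartition.add_entry]
    rw [Finset.sum_add_distrib]
    gcongr
    · exact Finset.subset_union_left
    · exact Finset.subset_union_right
  · intro k a
    rcases Nat.eq_zero_or_pos k with hk | hk
    · subst hk
      have hD : (0 • a).Des = (∅ : Set (ℕ × ℕ)) := by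
        ext p
        simp [PlanePartition.Des, PlanePartition.smul_entry]
      rw [PlanePartition.cvol, hD, finsum_mem_empty, Nat.zero_mul]
    · have hD : (k • a).Des = a.Des := by
        ext p
        simp only [PlanePartition.Des, Set.mem_setOf_eq, PlanePartition.smul_entry]
        constructor
        · intro h; exact lt_of_mul_lt_mul_left h (Nat.zero_le k)
        · intro h; exact mul_lt_mul_of_pos_left h hk
      have hc : (k • a).Des = ↑(a.des_finite.toFinset) := by
        rw [hD, a.des_finite.coe_toFinset]
      rw [(k • a).cvol_eq_sum _ hc,
        a.cvol_eq_sum _ (a.des_finite.coe_toFinset).symm, Finset.mul_sum]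
      simp only [PlanePartition.smul_entry]
  · intro a h i j
    by_contra hne
    have hS : {i' : ℕ | a.entry i' j ≠ 0}.Finite := by
      have : {i' : ℕ | a.entry i' j ≠ 0} ⊆ (fun i' => (i', j)) ⁻¹' {p : ℕ × ℕ | a.entry p.1 p.2 ≠ 0} := fun x hx => hx
      exact (a.finite_support.preimage (fun x _ y _ hxy => by
        simpa using congrArg Prod.fst hxy)).subset this
    have hne' : hS.toFinset.Nonempty := ⟨i, by simpa using hne⟩
    set m := hS.toFinset.max' hne' with hm
    have hmem : a.entry m j ≠ 0 := by
      have := hS.toFinset.max'_mem hne'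
      simpa using this
    have hm1 : a.entry (m + 1) j = 0 := by
      by_contra h1
      have : m + 1 ∈ hS.toFinset := by simpa using h1
      have := hS.toFinset.le_max' _ this
      omega
    have hdes : (m, j) ∈ a.des_finite.toFinset := by
      simp only [Set.Finite.mem_toFinset, PlanePartition.Des, Set.mem_setOf_eq]
      omega
    rw [a.cvol_eq_sum _ (a.des_finite.coe_toFinset).symm] at h
    have := (Finset.sum_eq_zero_iff.mp h) (m, j) hdes
    exact hmem this
end
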